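/- Let ψ : ℝⁿ → ℝ be C², let x₀ ∈ ℝⁿ, let (p_k)_{k∈ℕ} be a sequence of reals with p_k > 2 and p_k → ∞, and let x_k → x₀ be a sequence of points such that for every k one has ∇ψ(x_k) ≠ 0 and (p_k − 2)‖∇ψ(x_k)‖^{p_k−4} Δ_∞ψ(x_k) + ‖∇ψ(x_k)‖^{p_k−2} Δψ(x_k) = 0. Then Δ_∞ψ(x₀) = 0. -/

import Mathlib

open Filter Topology

/-- The infinity-Laplacian `Δ_∞ψ(x) = ⟨D²ψ(x) ∇ψ(x), ∇ψ(x)⟩` of `ψ` at `x`,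
where the Hessian is `D²ψ(x) = D(∇ψ)(x)`. -/
noncomputable def infLap (n : ℕ) (ψ : EuclideanSpace ℝ (Fin n) → ℝ)
    (x : EuclideanSpace ℝ (Fin n)) : ℝ :=
  inner ℝ (fderiv ℝ (gradient ψ) x (gradient ψ x)) (gradient ψ x)

/-- The Laplacian `Δψ(x)`, i.e. the trace of the Hessian `D²ψ(x)`. -/
noncomputable def lap (n : ℕ) (ψ : EuclideanSpace ℝ (Fin n) → ℝ)
    (x : EuclideanSpace ℝ (Fin n)) : ℝ :=
  ∑ i : Fin n, inner ℝ (fderiv ℝ (gradient ψ) x (EuclideanSpace.single i (1 : ℝ)))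
    (EuclideanSpace.single i (1 : ℝ))

/-!
Dividing the equation at `x_k` by `(p_k - 2)‖∇ψ(x_k)‖^{p_k-4} ≠ 0` gives
`Δ_∞ψ(x_k) = -‖∇ψ(x_k)‖² Δψ(x_k) / (p_k - 2)`. For `ψ ∈ C²` the numerator converges to
`-‖∇ψ(x₀)‖² Δψ(x₀)` while the denominator tends to `∞`, so `Δ_∞ψ(x_k) → 0`; by continuity of
`Δ_∞ψ` the limit is also `Δ_∞ψ(x₀)`.
-/

section Gradient

variable {F : Type*} [NormedAddCommGroup F] [InnerProductSpace ℝ F] [CompleteSpace F]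
  {f : F → ℝ}

theorem ContDiff.contDiff_gradient {k m : WithTop ℕ∞} (hf : ContDiff ℝ k f) (hmk : m + 1 ≤ k) :
    ContDiff ℝ m (gradient f) :=
  (InnerProductSpace.toDual ℝ F).symm.contDiff.comp (hf.fderiv_right hmk)

theorem ContDiff.continuous_gradient (hf : ContDiff ℝ 1 f) : Continuous (gradient f) :=
  (hf.contDiff_gradient (m := 0) le_rfl).continuous

theorem ContDiff.continuous_fderiv_gradient (hf : ContDiff ℝ 2 f) :
    Continuous (fderiv ℝ (gradient f)) :=
  (hf.contDiff_gradient (m := 1) le_rfl).continuous_fderiv one_ne_zero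

end Gradient

section Laplacians

variable {n : ℕ} {ψ : EuclideanSpace ℝ (Fin n) → ℝ}

theorem continuous_infLap (hψ : ContDiff ℝ 2 ψ) : Continuous (infLap n ψ) :=
  have hg := (hψ.of_le one_le_two).continuous_gradient
  (hψ.continuous_fderiv_gradient.clm_apply hg).inner hg

theorem continuous_lap (hψ : ContDiff ℝ 2 ψ) : Continuous (lap n ψ) :=
  continuous_finsetSum _ fun _ _ =>
    (hψ.continuous_fderiv_gradient.clm_apply continuous_const).inner continuous_const

end Laplacians

theorem eq_neg_mul_div_of_pLaplace_eq_zero {t q a b : ℝ} (ht : 0 < t) (hq : q ≠ 2)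
    (h : (q - 2) * t ^ (q - 4) * a + t ^ (q - 2) * b = 0) :
    a = -(t ^ 2 * b) / (q - 2) := by
  have hsplit : t ^ (q - 2) = t ^ (q - 4) * t ^ 2 := by
    rw [← Real.rpow_natCast, ← Real.rpow_add ht]
    ring_nf
  have hfactor : t ^ (q - 4) * ((q - 2) * a + t ^ 2 * b) = 0 := by
    rw [← h, hsplit]
    ring
  have hlin := (mul_eq_zero.1 hfactor).resolve_left (Real.rpow_pos_of_pos ht _).ne'
  rw [eq_div_iff (sub_ne_zero.2 hq)]
  linear_combination hlin

/-- passing to the limit in the `p_k`-Laplace equality gives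
`Δ_∞ψ(x₀) = 0`. -/
theorem infLap_eq_zero_of_limit
    (n : ℕ) (ψ : EuclideanSpace ℝ (Fin n) → ℝ) (hψ : ContDiff ℝ 2 ψ)
    (x₀ : EuclideanSpace ℝ (Fin n))
    (p : ℕ → ℝ) (hp2 : ∀ k, 2 < p k) (hp : Tendsto p atTop atTop)
    (x : ℕ → EuclideanSpace ℝ (Fin n)) (hx : Tendsto x atTop (nhds x₀))
    (hgrad : ∀ k, gradient ψ (x k) ≠ 0)
    (heq : ∀ k, (p k - 2) * ‖gradient ψ (x k)‖ ^ (p k - 4) * infLap n ψ (x k)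
      + ‖gradient ψ (x k)‖ ^ (p k - 2) * lap n ψ (x k) = 0) :
    infLap n ψ x₀ = 0 := by
  have hsolved : ∀ k, infLap n ψ (x k)
      = -(‖gradient ψ (x k)‖ ^ 2 * lap n ψ (x k)) / (p k - 2) := fun k =>
    eq_neg_mul_div_of_pLaplace_eq_zero (norm_pos_iff.2 (hgrad k)) (hp2 k).ne' (heq k)
  have hnum : Continuous fun y => -(‖gradient ψ y‖ ^ 2 * lap n ψ y) :=
    (((hψ.of_le one_le_two).continuous_gradient.norm.pow 2).mul (continuous_lap hψ)).neg
  have hlim_zero : Tendsto (fun k => infLap n ψ (x k)) atTop (𝓝 0) := by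
    simp only [hsolved]
    exact ((hnum.tendsto x₀).comp hx).div_atTop (tendsto_atTop_add_const_right _ _ hp)
  exact tendsto_nhds_unique (((continuous_infLap hψ).tendsto x₀).comp hx) hlim_zero
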